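/- arXiv:2309.07587 — 3 statements merged into one kernel-verified Lean document; each statement's English description precedes it below -/
import Mathlib

section
/- Let G be a compact graph and let v_1, v_2 be distinct vertices of G each of degree at least 3 lying on a common cycle C. Then v_1 and v_2 are adjacent in G. -/
/-- `G` has no even cycles. -/
def SimpleGraph.NoEvenCycles {V : Type*} (G : SimpleGraph V) : Prop :=
  ∀ ⦃v : V⦄ (c : G.Walk v v), c.IsCycle → ¬ Even c.length

/-- The odd-cycle condition: every two cycles either share a vertex or are joined by an
edge of `G`. -/
def SimpleGraph.OddCycleCondition {V : Type*} (G : SimpleGraph V) : Prop :=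
  ∀ ⦃u v : V⦄ (c₁ : G.Walk u u) (c₂ : G.Walk v v), c₁.IsCycle → c₂.IsCycle →
    (∃ x, x ∈ c₁.support ∧ x ∈ c₂.support) ∨
    (∃ x y, x ∈ c₁.support ∧ y ∈ c₂.support ∧ G.Adj x y)

/-- A compact graph: a finite connected simple graph in which every vertex has degree
greater than one, with no even cycles, satisfying the odd-cycle condition. -/
def SimpleGraph.IsCompact {V : Type*} [Fintype V] (G : SimpleGraph V)
    [DecidableRel G.Adj] : Prop :=
  G.Connected ∧ (∀ v : V, 2 ≤ G.degree v) ∧ G.NoEvenCycles ∧ G.OddCycleCondition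

/-!
A graph without even cycles contains no theta: if three paths join two vertices and any two of
them form a cycle, the three cycle lengths sum to twice the total length, so one of them is even.
Hence a path that joins two vertices of a cycle `C` and meets `C` only at its ends runs along `C`.

Consequently `vᵢ` has a neighbour `xᵢ` off `C`, and every neighbour of the set `Rᵢ` of vertices
reachable from `xᵢ` in `G - C` lies in `Rᵢ ∪ {vᵢ}`. This makes `R₁ ∪ {v₁}` and `R₂ ∪ {v₂}`
disjoint, with no edge between them other than possibly `v₁v₂`, while minimum degree two gives a
cycle `Dᵢ` inside `Rᵢ ∪ {vᵢ}` (a longest path argument). The odd-cycle condition for `D₁` and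
`D₂` then forces the edge `v₁v₂`.
-/

namespace SimpleGraph

variable {V : Type*} {G : SimpleGraph V}

namespace Walk

lemma IsPath.isCycle_append_reverse {u v : V} {p q : G.Walk u v} (hp : p.IsPath)
    (hq : q.IsPath) (hpq : ∀ x ∈ p.support, x ∈ q.support → x = u ∨ x = v) (hne : p ≠ q) :
    (p.append q.reverse).IsCycle := by
  refine hp.isCycle_append hq.reverse (fun x hxp hxq => ?_) ?_
  · have hxq' : x ∈ q.support := by
      simpa using List.mem_of_mem_tail hxq
    rcases hpq x (List.mem_of_mem_tail hxp) hxq' with rfl | rfl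
    · exact (List.nodup_cons.mp (p.cons_tail_support ▸ hp.support_nodup)).1 hxp
    · exact (List.nodup_cons.mp (q.reverse.cons_tail_support ▸ hq.reverse.support_nodup)).1 hxq
  · by_contra! h
    exact hne (eq_of_length_le_one h.1 (by simpa using h.2))

end Walk

open Walk

lemma NoEvenCycles.not_isCycle_append_reverse (hG : G.NoEvenCycles) {u v : V}
    {p q r : G.Walk u v} (hpq : (p.append q.reverse).IsCycle)
    (hpr : (p.append r.reverse).IsCycle) : ¬ (q.append r.reverse).IsCycle := by
  intro hqr
  have h₁ := hG _ hpq
  have h₂ := hG _ hpr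
  have h₃ := hG _ hqr
  simp only [length_append, length_reverse, Nat.not_even_iff_odd, Nat.odd_iff] at h₁ h₂ h₃
  omega

lemma NoEvenCycles.edges_subset_of_isPath (hG : G.NoEvenCycles) {u v w : V}
    {c : G.Walk u u} (hc : c.IsCycle) (hv : v ∈ c.support) (hw : w ∈ c.support) (hvw : v ≠ w)
    {p : G.Walk v w} (hp : p.IsPath) (hpc : ∀ x ∈ p.support, x ∈ c.support → x = v ∨ x = w) :
    p.edges ⊆ c.edges := by
  classical
  intro e hep
  by_contra hec
  set c' := c.rotate v hv
  have hc' : c'.IsCycle := hc.rotate hv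
  have hw' : w ∈ c'.support := (c.mem_support_rotate_iff v hv).2 hw
  have hedges : ∀ {f}, f ∈ c'.edges → f ∈ c.edges := (c.rotate_edges v hv).perm.mem_iff.1
  set a := c'.takeUntil w hw'
  set b := (c'.dropUntil w hw').reverse
  have hab : a.append b.reverse = c' := by simp [a, b, take_spec]
  have ha : a.IsPath := hc'.isPath_takeUntil hw'
  have hb : b.IsPath :=
    (isPath_reverse_iff _).mp ((hab ▸ hc').isPath_of_append_right (not_nil_of_ne hvw))
  have glue : ∀ q : G.Walk v w, q.IsPath → q.support ⊆ c.support → q.edges ⊆ c.edges →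
      (q.append p.reverse).IsCycle := by
    intro q hq hqs hqe
    refine hq.isCycle_append_reverse hp (fun x hxq hxp => hpc x hxp (hqs hxq)) ?_
    rintro rfl
    exact hec (hqe hep)
  refine hG.not_isCycle_append_reverse (hab ▸ hc') (glue a ha ?_ ?_) (glue b hb ?_ ?_)
  · exact fun x hx => (c.mem_support_rotate_iff v hv).1 (c'.support_takeUntil_subset_support hw' hx)
  · exact fun f hf => hedges (c'.edges_takeUntil_subset_edges hw' hf)
  · intro x hx
    rw [support_reverse, List.mem_reverse] at hx
    exact (c.mem_support_rotate_iff v hv).1 (c'.support_dropUntil_subset_support hw' hx)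
  · intro f hf
    rw [edges_reverse, List.mem_reverse] at hf
    exact hedges (c'.edges_dropUntil_subset_edges hw' hf)

lemma NoEvenCycles.exists_adj_notMem_support (hG : G.NoEvenCycles) {u v : V} {c : G.Walk u u}
    (hc : c.IsCycle) (hv : v ∈ c.support) [Fintype (G.neighborSet v)]
    (hdeg : 3 ≤ G.degree v) : ∃ x, G.Adj v x ∧ x ∉ c.support := by
  have htwo := hc.ncard_neighborSet_toSubgraph_eq_two hv
  have hlt : (c.toSubgraph.neighborSet v).ncard < (G.neighborSet v).ncard := by
    rw [htwo, Set.ncard_eq_toFinset_card', Set.toFinset_card, card_neighborSet_eq_degree]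
    omega
  obtain ⟨x, hvx, hxc⟩ :=
    Set.exists_mem_notMem_of_ncard_lt_ncard hlt (Set.finite_of_ncard_ne_zero (by omega))
  rw [mem_neighborSet] at hvx
  refine ⟨x, hvx, fun hx => hxc ?_⟩
  rw [Subgraph.mem_neighborSet, adj_toSubgraph_iff_mem_edges]
  refine hG.edges_subset_of_isPath hc hv hx hvx.ne hvx.isPath_toWalk ?_ (by simp)
  simp

def ReachableAvoiding (G : SimpleGraph V) (s : Set V) (x y : V) : Prop :=
  ∃ p : G.Walk x y, ∀ z ∈ p.support, z ∉ s

namespace ReachableAvoiding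

variable {s : Set V} {x y z : V}

lemma refl (hx : x ∉ s) : G.ReachableAvoiding s x x :=
  ⟨nil, by simpa using hx⟩

lemma symm (h : G.ReachableAvoiding s x y) : G.ReachableAvoiding s y x := by
  obtain ⟨p, hp⟩ := h
  exact ⟨p.reverse, by simpa using hp⟩

lemma trans (hxy : G.ReachableAvoiding s x y) (hyz : G.ReachableAvoiding s y z) :
    G.ReachableAvoiding s x z := by
  obtain ⟨p, hp⟩ := hxy
  obtain ⟨q, hq⟩ := hyz
  refine ⟨p.append q, fun w hw => ?_⟩
  rcases (mem_support_append_iff p q).1 hw with hw | hw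
  exacts [hp w hw, hq w hw]

lemma concat (h : G.ReachableAvoiding s x y) (hyz : G.Adj y z) (hz : z ∉ s) :
    G.ReachableAvoiding s x z := by
  obtain ⟨p, hp⟩ := h
  refine ⟨p.concat hyz, fun w hw => ?_⟩
  rw [support_concat, List.mem_append, List.mem_singleton] at hw
  rcases hw with hw | rfl
  exacts [hp w hw, hz]

lemma notMem_right (h : G.ReachableAvoiding s x y) : y ∉ s := by
  obtain ⟨p, hp⟩ := h
  exact hp y p.end_mem_support

end ReachableAvoiding

lemma NoEvenCycles.neighborSet_subset_of_reachableAvoiding (hG : G.NoEvenCycles) {u v x y : V}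
    {c : G.Walk u u} (hc : c.IsCycle) (hv : v ∈ c.support) (hvx : G.Adj v x)
    (hxy : G.ReachableAvoiding {z | z ∈ c.support} x y) :
    G.neighborSet y ⊆ insert v {z | G.ReachableAvoiding {z | z ∈ c.support} x z} := by
  classical
  intro z hyz
  by_cases hz : z ∈ c.support
  · refine Or.inl (by_contra fun hzv => ?_)
    obtain ⟨q, hq⟩ := hxy
    have hqz : (q.concat hyz).bypass.support ⊆ q.support ++ [z] :=
      (support_concat q hyz ▸ (q.concat hyz).support_bypass_subset_support)
    have hp : (cons hvx (q.concat hyz).bypass).IsPath := by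
      refine (cons_isPath_iff _ _).2 ⟨bypass_isPath _, fun h => ?_⟩
      rcases List.mem_append.1 (hqz h) with h | h
      · exact hq v h hv
      · exact hzv (List.mem_singleton.1 h).symm
    have hpc : ∀ w ∈ (cons hvx (q.concat hyz).bypass).support, w ∈ c.support → w = v ∨ w = z := by
      intro w hw hwc
      rw [support_cons, List.mem_cons] at hw
      rcases hw with rfl | hw
      · exact Or.inl rfl
      rcases List.mem_append.1 (hqz hw) with h | h
      · exact absurd hwc (hq w h)
      · exact Or.inr (List.mem_singleton.1 h)
    have hvxc : s(v, x) ∈ c.edges :=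
      hG.edges_subset_of_isPath hc hv hz (Ne.symm hzv) hp hpc List.mem_cons_self
    exact hq x q.start_mem_support (c.snd_mem_support_of_mem_edges hvxc)
  · exact Or.inr (hxy.concat hyz hz)

lemma exists_isCycle_of_neighborSet_subset [Fintype V] [DecidableRel G.Adj] {S : Set V}
    {v x : V} (hdeg : ∀ y ∈ S, 2 ≤ G.degree y) (hS : ∀ y ∈ S, G.neighborSet y ⊆ insert v S)
    (hx : x ∈ S) (hvx : G.Adj v x) :
    ∃ (y : V) (d : G.Walk y y), d.IsCycle ∧ ∀ z ∈ d.support, z ∈ insert v S := by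
  classical
  by_contra! hno
  suffices ∀ n, ∃ (y : V) (p : G.Walk y v), p.IsPath ∧ y ∈ S ∧
      (∀ z ∈ p.support, z ∈ insert v S) ∧ n ≤ p.length by
    obtain ⟨_, p, hp, -, -, hn⟩ := this (Fintype.card V)
    exact hn.not_gt hp.length_lt
  intro n
  induction n with
  | zero =>
    refine ⟨x, hvx.symm.toWalk, hvx.symm.isPath_toWalk, hx, ?_, Nat.zero_le _⟩
    simp [hx]
  | succ n ih =>
    obtain ⟨y, p, hp, hy, hpS, hn⟩ := ih
    obtain ⟨y', hy', hy'p⟩ : ∃ y' ∈ G.neighborFinset y, y' ≠ p.snd :=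
      Finset.exists_mem_ne (by rw [card_neighborFinset_eq_degree]; exact hdeg y hy) _
    rw [mem_neighborFinset] at hy'
    by_cases hy'mem : y' ∈ p.support
    · exfalso
      set q := p.takeUntil y' hy'mem
      have hq : q.IsPath := hp.takeUntil hy'mem
      have hd : (cons hy' q.reverse).IsCycle := by
        refine (cons_isCycle_iff _ _).2 ⟨hq.reverse, fun h => hy'p ?_⟩
        rw [edges_reverse, List.mem_reverse] at h
        have hlen := hq.length_eq_one_of_mem_edges h
        rw [← p.snd_takeUntil hy'.ne.symm hy'mem, snd, ← hlen, getVert_length]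
      obtain ⟨z, hz, hzS⟩ := hno y _ hd
      rw [support_cons, List.mem_cons, support_reverse, List.mem_reverse] at hz
      rcases hz with rfl | hz
      · exact hzS (Set.mem_insert_of_mem _ hy)
      · exact hzS (hpS z (p.support_takeUntil_subset_support hy'mem hz))
    · have hy'S : y' ∈ S := by
        rcases hS y hy hy' with rfl | h
        · exact absurd p.end_mem_support hy'mem
        · exact h
      refine ⟨y', cons hy'.symm p, (cons_isPath_iff _ _).2 ⟨hp, hy'mem⟩, hy'S, ?_, ?_⟩
      · intro z hz
        rw [support_cons, List.mem_cons] at hz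
        rcases hz with rfl | hz
        exacts [Set.mem_insert_of_mem _ hy'S, hpS z hz]
      · simpa using hn

end SimpleGraph

open SimpleGraph in
/-- In a compact graph, two distinct vertices of degree at least 3 lying on a common
cycle are adjacent. -/
theorem stmt3 {V : Type*} [Fintype V] (G : SimpleGraph V) [DecidableRel G.Adj]
    (hG : G.IsCompact) {v₁ v₂ : V} (hne : v₁ ≠ v₂)
    (h₁ : 3 ≤ G.degree v₁) (h₂ : 3 ≤ G.degree v₂)
    {u : V} (c : G.Walk u u) (hc : c.IsCycle)
    (hv₁ : v₁ ∈ c.support) (hv₂ : v₂ ∈ c.support) :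
    G.Adj v₁ v₂ := by
  obtain ⟨-, hdeg, hG, hocc⟩ := hG
  by_contra hadj
  set s : Set V := {z | z ∈ c.support}
  obtain ⟨x₁, hvx₁, hx₁⟩ := hG.exists_adj_notMem_support hc hv₁ h₁
  obtain ⟨x₂, hvx₂, hx₂⟩ := hG.exists_adj_notMem_support hc hv₂ h₂
  set R₁ := {z | G.ReachableAvoiding s x₁ z}
  set R₂ := {z | G.ReachableAvoiding s x₂ z}
  have hN₁ : ∀ y ∈ R₁, G.neighborSet y ⊆ insert v₁ R₁ :=
    fun y hy => hG.neighborSet_subset_of_reachableAvoiding hc hv₁ hvx₁ hy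
  have hN₂ : ∀ y ∈ R₂, G.neighborSet y ⊆ insert v₂ R₂ :=
    fun y hy => hG.neighborSet_subset_of_reachableAvoiding hc hv₂ hvx₂ hy
  obtain ⟨_, d₁, hd₁, hd₁R⟩ := exists_isCycle_of_neighborSet_subset (fun y _ => hdeg y) hN₁
    (ReachableAvoiding.refl hx₁) hvx₁
  obtain ⟨_, d₂, hd₂, hd₂R⟩ := exists_isCycle_of_neighborSet_subset (fun y _ => hdeg y) hN₂
    (ReachableAvoiding.refl hx₂) hvx₂
  have hdisj : ∀ z ∈ insert v₁ R₁, z ∉ insert v₂ R₂ := by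
    rintro z (rfl | hz₁) (rfl | hz₂)
    · exact hne rfl
    · exact hz₂.notMem_right hv₁
    · exact hz₁.notMem_right hv₂
    · rcases hN₁ x₂ (hz₁.trans hz₂.symm) hvx₂.symm with h | h
      exacts [hne h.symm, h.notMem_right hv₂]
  rcases hocc d₁ d₂ hd₁ hd₂ with ⟨z, hz₁, hz₂⟩ | ⟨z, z', hz, hz', hzz'⟩
  · exact hdisj z (hd₁R z hz₁) (hd₂R z hz₂)
  rcases hd₁R z hz with rfl | hz₁
  · rcases hd₂R z' hz' with rfl | hz₂
    · exact hadj hzz'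
    · exact hdisj z (Set.mem_insert _ _) (hN₂ z' hz₂ hzz'.symm)
  · exact hdisj z' (hN₁ z hz₁ hzz') (hd₂R z' hz')
end

section
/- A compact graph has at most three vertices of degree at least 3. -/
namespace SimpleGraph

variable {V : Type*} {G : SimpleGraph V}

namespace Walk

lemma IsPath.start_notMem_support_tail {u v : V} {p : G.Walk u v} (hp : p.IsPath) :
    u ∉ p.support.tail :=
  (List.nodup_cons.mp (p.cons_tail_support ▸ hp.support_nodup)).1

lemma mem_edges_of_length_eq_one {u v : V} {p : G.Walk u v} (h : p.length = 1) :
    s(u, v) ∈ p.edges := by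
  cases p with
  | nil => simp at h
  | cons _ q => cases q with
    | nil => simp
    | cons _ _ => simp at h

lemma one_lt_length_of_not_adj {u v : V} (p : G.Walk u v) (huv : u ≠ v) (h : ¬ G.Adj u v) :
    1 < p.length := by
  have h₀ : p.length ≠ 0 := fun h₀ => huv (eq_of_length_eq_zero h₀)
  have h₁ : p.length ≠ 1 := fun h₁ => h (adj_of_length_eq_one h₁)
  omega

lemma IsPath.exists_mem_support_ne_ne {u v : V} {p : G.Walk u v} (hp : p.IsPath)
    (h : 1 < p.length) : ∃ m ∈ p.support, m ≠ u ∧ m ≠ v := by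
  cases p with
  | nil => simp at h
  | @cons _ m _ hum q =>
    refine ⟨m, by simp, hum.ne.symm, ?_⟩
    rintro rfl
    have := length_eq_zero_iff.mpr (isPath_iff_nil.mp ((cons_isPath_iff _ _).mp hp).1)
    simp only [length_cons] at h
    omega

lemma IsPath.append_of_inter {u v w : V} {p : G.Walk u v} {q : G.Walk v w} (hp : p.IsPath)
    (hq : q.IsPath) (h : ∀ x ∈ p.support, x ∈ q.support → x = v) : (p.append q).IsPath := by
  rw [isPath_def, support_append, List.nodup_append]
  refine ⟨hp.support_nodup, hq.support_nodup.sublist (List.tail_sublist _), ?_⟩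
  rintro x hx _ hx' rfl
  exact hq.start_notMem_support_tail (h x hx (List.mem_of_mem_tail hx') ▸ hx')

lemma IsPath.isCycle_append_of_inter {u v : V} {p : G.Walk u v} {q : G.Walk v u}
    (hp : p.IsPath) (hq : q.IsPath) (h : ∀ x ∈ p.support, x ∈ q.support → x = u ∨ x = v)
    (hn : 1 < p.length ∨ 1 < q.length) : (p.append q).IsCycle := by
  refine hp.isCycle_append hq (fun x hx hx' => ?_) hn
  rcases h x (List.mem_of_mem_tail hx) (List.mem_of_mem_tail hx') with rfl | rfl
  · exact hp.start_notMem_support_tail hx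
  · exact hq.start_notMem_support_tail hx'

lemma IsCycle.eq_or_eq_of_mem_takeUntil_of_mem_dropUntil [DecidableEq V] {c p x : V}
    {C : G.Walk c c} (hC : C.IsCycle) (hp : p ∈ C.support)
    (hx₁ : x ∈ (C.takeUntil p hp).support) (hx₂ : x ∈ (C.dropUntil p hp).support) :
    x = c ∨ x = p := by
  have := hC.support_nodup
  rw [← take_spec C hp, tail_support_append, List.nodup_append'] at this
  rw [← cons_tail_support, List.mem_cons] at hx₁ hx₂
  rcases hx₁ with rfl | hx₁
  · exact .inl rfl
  rcases hx₂ with rfl | hx₂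
  · exact .inr rfl
  exact absurd hx₂ (this.2.2 hx₁)

lemma exists_isPath_support_subset {u v : V} (W : G.Walk u v) {x y : V} (hx : x ∈ W.support)
    (hy : y ∈ W.support) : ∃ p : G.Walk x y, p.IsPath ∧ p.support ⊆ W.support := by
  classical
  refine ⟨((W.takeUntil x hx).reverse.append (W.takeUntil y hy)).bypass, bypass_isPath _,
    fun z hz => ?_⟩
  replace hz := support_bypass_subset_support _ hz
  rw [mem_support_append_iff, support_reverse, List.mem_reverse] at hz
  exact hz.elim (W.support_takeUntil_subset_support hx ·) (W.support_takeUntil_subset_support hy ·)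

lemma exists_isPath_of_meet {c c' d d' x y : V} {X : G.Walk c c'} {Y : G.Walk d d'}
    (hXY : (∃ z, z ∈ X.support ∧ z ∈ Y.support) ∨
      (∃ x' y', x' ∈ X.support ∧ y' ∈ Y.support ∧ G.Adj x' y'))
    (hx : x ∈ X.support) (hy : y ∈ Y.support) :
    ∃ P : G.Walk x y, P.IsPath ∧ ∀ z ∈ P.support, z ∈ X.support ∨ z ∈ Y.support := by
  classical
  obtain ⟨x', y', hx', hy', W, hW⟩ : ∃ x' y', x' ∈ X.support ∧ y' ∈ Y.support ∧
      ∃ W : G.Walk x' y', ∀ z ∈ W.support, z ∈ X.support ∨ z ∈ Y.support := by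
    rcases hXY with ⟨z, hzX, hzY⟩ | ⟨x', y', hx', hy', h⟩
    · exact ⟨z, z, hzX, hzY, nil, by simp [hzX]⟩
    · refine ⟨x', y', hx', hy', h.toWalk, ?_⟩
      simp only [Adj.support_toWalk, List.mem_cons, List.not_mem_nil, or_false]
      rintro z (rfl | rfl)
      exacts [.inl hx', .inr hy']
  obtain ⟨P, -, hP⟩ := X.exists_isPath_support_subset hx hx'
  obtain ⟨Q, -, hQ⟩ := Y.exists_isPath_support_subset hy' hy
  refine ⟨((P.append W).append Q).bypass, bypass_isPath _, fun z hz => ?_⟩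
  replace hz := support_bypass_subset_support _ hz
  simp only [mem_support_append_iff] at hz
  rcases hz with (hz | hz) | hz
  exacts [.inl (hP hz), hW z hz, .inr (hQ hz)]

/-- The path runs along `C` from the last vertex of `s` before `d` to the first one after `d`. -/
lemma IsCycle.exists_isPath_inter_eq_pair {c d a b : V} {C : G.Walk c c} (hC : C.IsCycle)
    (s : Finset V) (hd : d ∈ C.support) (hds : d ∉ s) (ha : a ∈ C.support) (has : a ∈ s)
    (hb : b ∈ C.support) (hbs : b ∈ s) (hab : a ≠ b) :
    ∃ p ∈ s, ∃ q ∈ s, p ≠ q ∧ ∃ R : G.Walk p q, R.IsPath ∧ 1 < R.length ∧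
      ∀ x ∈ R.support, x ∈ s → x = p ∨ x = q := by
  classical
  set C' := C.rotate d hd
  have hC' : C'.IsCycle := hC.rotate hd
  have hmem : ∀ {x}, x ∈ C.support → x ∈ C'.support := (C.mem_support_rotate_iff d hd).mpr
  obtain ⟨p, hps, hpC', hfirst⟩ :=
    C'.exists_mem_support_forall_mem_support_imp_eq s ⟨a, by simp [has, hmem ha]⟩
  have hdp : d ≠ p := fun h => hds (h ▸ hps)
  set W₁ := C'.takeUntil p hpC'
  set W₂ := C'.dropUntil p hpC'
  have hspec : W₁.append W₂ = C' := take_spec _ hpC'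
  have hW₂ : W₂.IsPath := (hspec ▸ hC').isPath_of_append_right (not_nil_of_ne hdp)
  obtain ⟨y, hys, hyp, hyW₂⟩ : ∃ y ∈ s, y ≠ p ∧ y ∈ W₂.support := by
    obtain ⟨y, hyC, hys, hyp⟩ : ∃ y ∈ C.support, y ∈ s ∧ y ≠ p := by
      by_cases hap : a = p
      · exact ⟨b, hb, hbs, hap ▸ hab.symm⟩
      · exact ⟨a, ha, has, hap⟩
    have hyC' := hmem hyC
    rw [← hspec, support_append, List.mem_append] at hyC'
    exact ⟨y, hys, hyp, List.mem_of_mem_tail (hyC'.resolve_left (hyp <| hfirst y hys ·))⟩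
  obtain ⟨q, hqs, hqW, hfirst'⟩ := W₂.reverse.exists_mem_support_forall_mem_support_imp_eq
    (s.erase p) ⟨y, by simp [hys, hyp, hyW₂]⟩
  obtain ⟨hqp, hqs⟩ := Finset.mem_erase.mp hqs
  set V₁ := W₂.reverse.takeUntil q hqW
  have hpV₁ : p ∉ V₁.support := endpoint_notMem_support_takeUntil hW₂.reverse hqW hqp.symm
  refine ⟨p, hps, q, hqs, hqp.symm, W₁.reverse.append V₁, ?_, ?_, ?_⟩
  · refine (hC'.isPath_takeUntil hpC').reverse.append_of_inter
      (hW₂.reverse.takeUntil hqW) fun x hx hx' => ?_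
    have hxW₂ : x ∈ W₂.support := by
      simpa using W₂.reverse.support_takeUntil_subset_support hqW hx'
    rw [support_reverse, List.mem_reverse] at hx
    exact (hC'.eq_or_eq_of_mem_takeUntil_of_mem_dropUntil hpC' hx hxW₂).resolve_right
      fun h => hpV₁ (h ▸ hx')
  · have h₁ : W₁.length ≠ 0 := fun h => hdp (eq_of_length_eq_zero h)
    have h₂ : V₁.length ≠ 0 := fun h => hds (eq_of_length_eq_zero h ▸ hqs)
    simp only [length_append, length_reverse]
    omega
  · intro x hx hxs
    rw [mem_support_append_iff, support_reverse, List.mem_reverse] at hx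
    refine hx.elim (.inl <| hfirst x hxs ·) fun hx => ?_
    by_cases hxp : x = p
    · exact .inl hxp
    · exact .inr (hfirst' x (Finset.mem_erase.mpr ⟨hxp, hxs⟩) hx)

lemma IsPath.exists_isCycle_of_adj_end {b t z : V} {p : G.Walk b t} (hp : p.IsPath)
    (hpn : ¬ p.Nil) (hz : G.Adj t z) (hzp : z ∈ p.support) (hzpen : z ≠ p.penultimate) :
    ∃ Z : G.Walk t t, Z.IsCycle ∧ ∀ x ∈ Z.support, x ∈ p.support := by
  classical
  have hze : s(t, z) ∉ p.edges := fun h => by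
    have : z ∈ p.toSubgraph.neighborSet t := adj_toSubgraph_iff_mem_edges.mpr h
    rw [hp.neighborSet_toSubgraph_endpoint hpn] at this
    exact hzpen this
  refine ⟨cons hz (p.dropUntil z hzp), (cons_isCycle_iff _ hz).mpr
    ⟨hp.dropUntil hzp, (hze <| p.edges_dropUntil_subset_edges hzp ·)⟩, fun x hx => ?_⟩
  rw [support_cons, List.mem_cons] at hx
  exact hx.elim (· ▸ p.end_mem_support) (p.support_dropUntil_subset_support hzp ·)

lemma IsCycle.exists_adj_notMem_edges {u v : V} [Fintype (G.neighborSet u)]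
    {C : G.Walk v v} (hC : C.IsCycle) (hu : u ∈ C.support) (hdeg : 3 ≤ G.degree u) :
    ∃ b, G.Adj u b ∧ s(u, b) ∉ C.edges := by
  by_contra! h
  have hsub : G.neighborSet u ⊆ C.toSubgraph.neighborSet u :=
    fun b hb => adj_toSubgraph_iff_mem_edges.mpr (h b hb)
  have := Set.ncard_le_ncard hsub C.finite_neighborSet_toSubgraph
  rw [hC.ncard_neighborSet_toSubgraph_eq_two hu, Set.ncard_eq_toFinset_card',
    ← neighborFinset_def, card_neighborFinset_eq_degree] at this
  omega

end Walk

open Walk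

namespace NoEvenCycles

lemma odd_length (hG : G.NoEvenCycles) {u : V} {c : G.Walk u u} (hc : c.IsCycle) :
    Odd c.length :=
  Nat.not_even_iff_odd.mp (hG c hc)

theorem ear_eq_edge (hG : G.NoEvenCycles) {c p q : V} {C : G.Walk c c} (hC : C.IsCycle)
    (hp : p ∈ C.support) (hq : q ∈ C.support) (hpq : p ≠ q) {P : G.Walk p q} (hP : P.IsPath)
    (hPC : ∀ x ∈ P.support, x ∈ C.support → x = p ∨ x = q) :
    P.length = 1 ∧ s(p, q) ∈ C.edges := by
  classical
  have hq' : q ∈ (C.rotate p hp).support := (C.mem_support_rotate_iff p hp).mpr hq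
  set B₁ := (C.rotate p hp).takeUntil q hq'
  set B₂ := (C.rotate p hp).dropUntil q hq'
  have hspec : B₁.append B₂ = C.rotate p hp := take_spec _ hq'
  have hC' : (B₁.append B₂).IsCycle := hspec ▸ hC.rotate hp
  have hB₁ : B₁.IsPath := (hC.rotate hp).isPath_takeUntil hq'
  have hB₂ : B₂.IsPath := hC'.isPath_of_append_right (not_nil_of_ne hpq)
  have hsupp : ∀ x, x ∈ B₁.support ∨ x ∈ B₂.support → x ∈ C.support := fun x hx => by
    rwa [← C.mem_support_rotate_iff p hp, ← hspec, mem_support_append_iff]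
  have hedges : ∀ e, e ∈ B₁.edges ∨ e ∈ B₂.edges → e ∈ C.edges := fun e he => by
    rwa [← (C.rotate_edges p hp).perm.mem_iff, ← hspec, edges_append, List.mem_append]
  have hodd₁ (hn : 1 < P.length ∨ 1 < B₁.length) : Odd (P.length + B₁.length) := by
    simpa using hG.odd_length <| hP.isCycle_append_of_inter hB₁.reverse
      (fun x hx hx' => hPC x hx <| hsupp x <| .inl <| by simpa using hx') (by simpa using hn)
  have hodd₂ (hn : 1 < P.length ∨ 1 < B₂.length) : Odd (P.length + B₂.length) := by
    simpa using hG.odd_length <| hP.isCycle_append_of_inter hB₂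
      (fun x hx hx' => hPC x hx <| hsupp x <| .inr hx') hn
  have hodd : Odd (B₁.length + B₂.length) := by simpa using hG.odd_length hC'
  have hP₀ : P.length ≠ 0 := fun h => hpq (eq_of_length_eq_zero h)
  have hB₁₀ : B₁.length ≠ 0 := fun h => hpq (eq_of_length_eq_zero h)
  have hB₂₀ : B₂.length ≠ 0 := fun h => hpq (eq_of_length_eq_zero h).symm
  have key : ¬ ((1 < P.length ∨ 1 < B₁.length) ∧ (1 < P.length ∨ 1 < B₂.length)) := by
    rintro ⟨h₁, h₂⟩
    have := hodd₁ h₁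
    have := hodd₂ h₂
    simp only [Nat.odd_iff] at *
    omega
  refine ⟨by omega, ?_⟩
  rcases (by omega : B₁.length = 1 ∨ B₂.length = 1) with h | h
  · exact hedges _ (.inl (mem_edges_of_length_eq_one h))
  · exact hedges _ (.inr (Sym2.eq_swap ▸ mem_edges_of_length_eq_one h))

theorem subsingleton_inter_of_notMem (hG : G.NoEvenCycles) {c x d : V} {C : G.Walk c c}
    {X : G.Walk x x} (hC : C.IsCycle) (hX : X.IsCycle) (hdC : d ∈ C.support)
    (hdX : d ∉ X.support) : {y | y ∈ C.support ∧ y ∈ X.support}.Subsingleton := by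
  classical
  rintro a ⟨haC, haX⟩ b ⟨hbC, hbX⟩
  by_contra hab
  obtain ⟨p, hp, q, hq, hpq, R, hR, hlen, hRX⟩ := hC.exists_isPath_inter_eq_pair
    X.support.toFinset hdC (by simpa) haC (by simpa) hbC (by simpa) hab
  simp only [List.mem_toFinset] at hp hq hRX
  exact hlen.ne' (hG.ear_eq_edge hX hp hq hpq hR hRX).1

theorem subsingleton_inter_of_mem_edges (hG : G.NoEvenCycles) {c x : V} {C : G.Walk c c}
    {X : G.Walk x x} (hC : C.IsCycle) (hX : X.IsCycle) {e : Sym2 V} (heC : e ∈ C.edges)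
    (heX : e ∉ X.edges) : {y | y ∈ C.support ∧ y ∈ X.support}.Subsingleton := by
  induction e using Sym2.ind with | _ y z =>
  by_cases hy : y ∈ X.support
  · by_cases hz : z ∈ X.support
    · have hyz := C.adj_of_mem_edges heC
      exact absurd (hG.ear_eq_edge hX hy hz hyz.ne hyz.isPath_toWalk (by simp)).2 heX
    · exact hG.subsingleton_inter_of_notMem hC hX (C.snd_mem_support_of_mem_edges heC) hz
  · exact hG.subsingleton_inter_of_notMem hC hX (C.fst_mem_support_of_mem_edges heC) hy

theorem notMem_support_of_meet (hG : G.NoEvenCycles) {u x z w : V} {A B : G.Walk u u}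
    {X : G.Walk x x} (hA : A.IsCycle) (hB : B.IsCycle) (hX : X.IsCycle)
    (hAB : ∀ y ∈ A.support, y ∈ B.support → y = u) (huX : u ∉ X.support)
    (hzA : z ∈ A.support) (hzX : z ∈ X.support) (hwB : w ∈ B.support) : w ∉ X.support := by
  intro hwX
  have hzu : z ≠ u := fun h => huX (h ▸ hzX)
  have hwu : w ≠ u := fun h => huX (h ▸ hwX)
  have hAX := hG.subsingleton_inter_of_notMem hA hX A.start_mem_support huX
  have hBX := hG.subsingleton_inter_of_notMem hB hX B.start_mem_support huX
  obtain ⟨P₁, hP₁, hP₁A⟩ := A.exists_isPath_support_subset hzA A.start_mem_support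
  obtain ⟨P₂, hP₂, hP₂B⟩ := B.exists_isPath_support_subset B.start_mem_support hwB
  obtain ⟨Q, hQ, hQX⟩ := X.exists_isPath_support_subset hwX hzX
  have hP := hP₁.append_of_inter hP₂ fun y hy hy' => hAB y (hP₁A hy) (hP₂B hy')
  have hlen : 1 < (P₁.append P₂).length := by
    have h₁ : P₁.length ≠ 0 := fun h => hzu (eq_of_length_eq_zero h)
    have h₂ : P₂.length ≠ 0 := fun h => hwu (eq_of_length_eq_zero h).symm
    rw [length_append]
    omega
  have hF := hP.isCycle_append_of_inter hQ (fun y hy hy' => by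
    rw [mem_support_append_iff] at hy
    exact hy.imp (fun h => hAX ⟨hP₁A h, hQX hy'⟩ ⟨hzA, hzX⟩)
      (fun h => hBX ⟨hP₂B h, hQX hy'⟩ ⟨hwB, hwX⟩)) (.inl hlen)
  have hzw : z ≠ w := fun h => hzu (hAB z hzA (h ▸ hwB))
  exact hzw (hG.subsingleton_inter_of_notMem hF hX (by simp) huX ⟨by simp, hzX⟩ ⟨by simp, hwX⟩)

theorem disjoint_or_disjoint (hG : G.NoEvenCycles) {u v : V} {A B : G.Walk u u}
    {C D : G.Walk v v} (hA : A.IsCycle) (hB : B.IsCycle) (hC : C.IsCycle) (hD : D.IsCycle)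
    (hAB : ∀ x ∈ A.support, x ∈ B.support → x = u)
    (hCD : ∀ x ∈ C.support, x ∈ D.support → x = v) (hvA : v ∉ A.support)
    (hvB : v ∉ B.support) (huC : u ∉ C.support) (huD : u ∉ D.support) :
    ((∀ x ∈ A.support, x ∉ D.support) ∧ ∀ x ∈ B.support, x ∉ C.support) ∨
      ((∀ x ∈ A.support, x ∉ C.support) ∧ ∀ x ∈ B.support, x ∉ D.support) := by
  by_cases h : (∃ x ∈ A.support, x ∈ C.support) ∨ ∃ x ∈ B.support, x ∈ D.support
  · refine .inl ⟨fun x hxA hxD => ?_, fun x hxB hxC => ?_⟩ <;>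
      rcases h with ⟨y, hyA, hyC⟩ | ⟨y, hyB, hyD⟩
    · exact hG.notMem_support_of_meet hC hD hA hCD hvA hyC hyA hxD hxA
    · exact hG.notMem_support_of_meet hA hB hD hAB huD hxA hxD hyB hyD
    · exact hG.notMem_support_of_meet hA hB hC hAB huC hyA hyC hxB hxC
    · exact hG.notMem_support_of_meet hC hD hB hCD hvB hxC hxB hyD hyB
  · push Not at h
    exact .inr h

theorem not_adj_square (hG : G.NoEvenCycles) {a b c d : V} (hac : a ≠ c) (hbd : b ≠ d)
    (hab : G.Adj a b) (hbc : G.Adj b c) (hcd : G.Adj c d) : ¬ G.Adj d a := by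
  intro hda
  refine hG (cons hab (cons hbc (cons hcd (cons hda nil)))) ?_ ⟨2, rfl⟩
  simp [cons_isCycle_iff, hab.ne, hbc.ne, hcd.ne, hda.ne, hac, hbd, hab.ne.symm, hda.ne.symm,
    hac.symm]

theorem ncard_le_three_of_pairwise_adj (hG : G.NoEvenCycles) {S : Set V}
    (hS : S.Pairwise G.Adj) : S.ncard ≤ 3 := by
  by_contra! h
  have hfin := Set.finite_of_ncard_pos (by omega : 0 < S.ncard)
  obtain ⟨a, ha⟩ := Set.nonempty_of_ncard_ne_zero (by omega : S.ncard ≠ 0)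
  obtain ⟨b, c, d, hb, hc, hd, hbc, hbd, hcd⟩ := (Set.two_lt_ncard_iff hfin.sdiff).mp
    (by rw [Set.ncard_sdiff_singleton_of_mem ha]; omega : 2 < (S \ {a}).ncard)
  simp only [Set.mem_sdiff, Set.mem_singleton_iff] at hb hc hd
  exact hG.not_adj_square (Ne.symm hc.2) hbd (hS ha hb.1 (Ne.symm hb.2)) (hS hb.1 hc.1 hbc)
    (hS hc.1 hd.1 hcd) (hS hd.1 ha hd.2)

end NoEvenCycles

theorem OddCycleCondition.exists_common_isCycle (hocc : G.OddCycleCondition) {u v : V}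
    {A B : G.Walk u u} {C D : G.Walk v v} (hA : A.IsCycle) (hB : B.IsCycle) (hC : C.IsCycle)
    (hD : D.IsCycle) (hAB : ∀ x ∈ A.support, x ∈ B.support → x = u)
    (hCD : ∀ x ∈ C.support, x ∈ D.support → x = v) (hAD : ∀ x ∈ A.support, x ∉ D.support)
    (hBC : ∀ x ∈ B.support, x ∉ C.support) (huv : u ≠ v) (hadj : ¬ G.Adj u v) :
    ∃ F : G.Walk u u, F.IsCycle ∧ v ∈ F.support := by
  obtain ⟨P₁, hP₁, hP₁AC⟩ :=
    exists_isPath_of_meet (hocc A C hA hC) A.start_mem_support C.start_mem_support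
  obtain ⟨P₂, hP₂, hP₂BD⟩ :=
    exists_isPath_of_meet (hocc B D hB hD) B.start_mem_support D.start_mem_support
  refine ⟨P₁.append P₂.reverse, hP₁.isCycle_append_of_inter hP₂.reverse (fun x hx hx' => ?_)
    (.inl (P₁.one_lt_length_of_not_adj huv hadj)), by simp⟩
  rw [support_reverse, List.mem_reverse] at hx'
  rcases hP₁AC x hx with h | h <;> rcases hP₂BD x hx' with h' | h'
  · exact .inl (hAB x h h')
  · exact absurd h' (hAD x h)
  · exact absurd h (hBC x h')
  · exact .inr (hCD x h h')

lemma exists_isCycle_mem_edges_of_not_isBridge {u b : V} (hb : G.Adj u b)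
    (h : ¬ G.IsBridge s(u, b)) : ∃ C : G.Walk u u, C.IsCycle ∧ s(u, b) ∈ C.edges := by
  classical
  obtain ⟨w, C, hC, he⟩ : ∃ (w : V) (C : G.Walk w w), C.IsCycle ∧ s(u, b) ∈ C.edges := by
    by_contra! h'
    exact h ((isBridge_iff_forall_cycle_notMem (G.mem_edgeSet.mpr hb)).mpr h')
  have hu := C.fst_mem_support_of_mem_edges he
  exact ⟨C.rotate u hu, hC.rotate hu, (C.rotate_edges u hu).perm.mem_iff.mpr he⟩

lemma Connected.reachable_deleteEdges_or (hconn : G.Connected) (u a y : V) :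
    (G.deleteEdges {s(u, a)}).Reachable u y ∨ (G.deleteEdges {s(u, a)}).Reachable a y := by
  classical
  obtain ⟨P, hP⟩ := hconn.exists_isPath y u
  by_cases he : s(u, a) ∈ P.edges
  · have ha := P.snd_mem_support_of_mem_edges he
    have hu := endpoint_notMem_support_takeUntil hP ha (P.adj_of_mem_edges he).ne
    exact .inr (reachable_deleteEdges_iff_exists_walk.mpr
      ⟨P.takeUntil a ha, fun h => hu ((P.takeUntil a ha).fst_mem_support_of_mem_edges h)⟩).symm
  · exact .inl (reachable_deleteEdges_iff_exists_walk.mpr ⟨P, he⟩).symm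

namespace IsBridge

variable {u a : V}

lemma ne (hbr : G.IsBridge s(u, a)) : u ≠ a := by
  rintro rfl
  exact isBridge_iff.mp hbr (Reachable.refl u)

lemma symm (hbr : G.IsBridge s(u, a)) : G.IsBridge s(a, u) := Sym2.eq_swap ▸ hbr

lemma eq_of_adj (hbr : G.IsBridge s(u, a)) {x y : V}
    (hx : (G.deleteEdges {s(u, a)}).Reachable u x) (hy : (G.deleteEdges {s(u, a)}).Reachable a y)
    (hxy : G.Adj x y) : x = u ∧ y = a := by
  by_cases he : s(x, y) = s(u, a)
  · rcases Sym2.eq_iff.mp he with h | ⟨rfl, rfl⟩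
    · exact h
    · exact absurd hx (isBridge_iff.mp hbr)
  · exact absurd ((hx.trans (deleteEdges_adj.mpr ⟨hxy, he⟩).reachable).trans hy.symm)
      (isBridge_iff.mp hbr)

lemma reachable_deleteEdges_of_mem_support (hbr : G.IsBridge s(u, a)) {w x y : V}
    {Z : G.Walk w w} (hZ : Z.IsCycle) (hx : x ∈ Z.support) (hy : y ∈ Z.support) :
    (G.deleteEdges {s(u, a)}).Reachable x y := by
  classical
  refine reachable_deleteEdges_iff_exists_walk.mpr
    ⟨(Z.takeUntil x hx).reverse.append (Z.takeUntil y hy), fun h => ?_⟩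
  rw [edges_append, edges_reverse, List.mem_append, List.mem_reverse] at h
  exact hbr.notMem_edges_of_isCycle hZ <|
    h.elim (Z.edges_takeUntil_subset_edges hx ·) (Z.edges_takeUntil_subset_edges hy ·)

end IsBridge

section Finite

variable [Fintype V] [DecidableRel G.Adj] {u a : V}

theorem exists_isCycle_of_forall_adj_mem (S : Set V) {b : V} (hb : b ∈ S)
    (hbS : ∃ z ∈ S, G.Adj b z) (hdeg : ∀ y ∈ S, y ≠ b → 2 ≤ G.degree y)
    (hS : ∀ y ∈ S, y ≠ b → ∀ z, G.Adj y z → z ∈ S) :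
    ∃ (w : V) (Z : G.Walk w w), Z.IsCycle ∧ ∀ x ∈ Z.support, x ∈ S := by
  have hfin : {n | ∃ (t : V) (p : G.Walk b t), p.IsPath ∧ (∀ x ∈ p.support, x ∈ S) ∧
      p.length = n}.Finite :=
    (Set.finite_lt_nat (Fintype.card V)).subset fun _ ⟨_, _, hp, _, hn⟩ => hn ▸ hp.length_lt
  obtain ⟨_, ⟨t, p, hp, hpS, rfl⟩, hmax⟩ := hfin.exists_maximal ⟨0, b, nil, by simp [hb]⟩
  have hext : ∀ z ∈ S, G.Adj t z → z ∈ p.support := fun z hzS htz => by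
    by_contra hz
    have := hmax ⟨z, p.concat htz, hp.concat hz htz, fun x hx => by
      simp only [support_concat, List.mem_append, List.mem_singleton] at hx
      exact hx.elim (hpS x) (· ▸ hzS), rfl⟩ (by simp)
    simp at this
  have htb : t ≠ b := by
    rintro rfl
    obtain ⟨z, hzS, hbz⟩ := hbS
    have := hext z hzS hbz
    rw [nil_iff_support_eq.mp (isPath_iff_nil.mp hp), List.mem_singleton] at this
    exact hbz.ne this.symm
  have htS := hpS t p.end_mem_support
  obtain ⟨z, hz, hzp⟩ := Finset.exists_mem_ne (s := G.neighborFinset t)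
    (by have := hdeg t htS htb; rw [card_neighborFinset_eq_degree]; omega) p.penultimate
  rw [mem_neighborFinset] at hz
  obtain ⟨Z, hZ, hZp⟩ := hp.exists_isCycle_of_adj_end (not_nil_of_ne htb.symm) hz
    (hext z (hS t htS htb z hz) hz) hzp
  exact ⟨t, Z, hZ, fun x hx => hpS x (hZp x hx)⟩

theorem IsBridge.exists_isCycle_reachable (hbr : G.IsBridge s(u, a))
    (hdeg : ∀ y, 2 ≤ G.degree y) : ∃ (w : V) (Z : G.Walk w w), Z.IsCycle ∧
      ∀ x ∈ Z.support, (G.deleteEdges {s(u, a)}).Reachable a x := by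
  refine exists_isCycle_of_forall_adj_mem {x | (G.deleteEdges {s(u, a)}).Reachable a x}
    (Reachable.refl a) ?_ (fun y _ _ => hdeg y) ?_
  · obtain ⟨z, hz, hzu⟩ := Finset.exists_mem_ne (s := G.neighborFinset a)
      (by rw [card_neighborFinset_eq_degree]; have := hdeg a; omega) u
    rw [mem_neighborFinset] at hz
    refine ⟨z, (deleteEdges_adj.mpr ⟨hz, ?_⟩).reachable, hz⟩
    simp [hzu, hbr.ne.symm]
  · intro y hy hya z hyz
    by_cases he : s(y, z) = s(u, a)
    · rcases Sym2.eq_iff.mp he with ⟨rfl, rfl⟩ | ⟨rfl, -⟩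
      · exact absurd hy.symm (isBridge_iff.mp hbr)
      · exact absurd rfl hya
    · exact hy.trans (deleteEdges_adj.mpr ⟨hyz, he⟩).reachable

/-- A cycle on the far side of the bridge can be joined to `Z` only by the bridge itself. -/
theorem IsBridge.mem_support_of_forall_reachable (hbr : G.IsBridge s(u, a))
    (hdeg : ∀ y, 2 ≤ G.degree y) (hocc : G.OddCycleCondition) {w : V} {Z : G.Walk w w}
    (hZ : Z.IsCycle) (hZa : ∀ x ∈ Z.support, (G.deleteEdges {s(u, a)}).Reachable a x) :
    a ∈ Z.support := by
  obtain ⟨_, D, hD, hDu⟩ := hbr.symm.exists_isCycle_reachable hdeg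
  rw [Sym2.eq_swap] at hDu
  rcases hocc Z D hZ hD with ⟨x, hxZ, hxD⟩ | ⟨x, y, hxZ, hyD, hxy⟩
  · exact absurd ((hDu x hxD).trans (hZa x hxZ).symm) (isBridge_iff.mp hbr)
  · exact (hbr.eq_of_adj (hDu y hyD) (hZa x hxZ) hxy.symm).2 ▸ hxZ

theorem exists_isCycle_mem_support (hdeg : ∀ y, 2 ≤ G.degree y) (hocc : G.OddCycleCondition)
    (x : V) : ∃ (w : V) (Z : G.Walk w w), Z.IsCycle ∧ x ∈ Z.support := by
  by_contra! h
  obtain ⟨z, hz⟩ := G.degree_pos_iff_exists_adj x |>.mp (by have := hdeg x; omega)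
  have hbr : G.IsBridge s(z, x) :=
    (isBridge_iff_forall_cycle_notMem (G.mem_edgeSet.mpr hz.symm)).mpr
      fun w Z hZ he => h w Z hZ (Z.snd_mem_support_of_mem_edges he)
  obtain ⟨w, Z, hZ, hZx⟩ := hbr.exists_isCycle_reachable hdeg
  exact h w Z hZ (hbr.mem_support_of_forall_reachable hdeg hocc hZ hZx)

theorem IsBridge.mem_support_or_mem_support (hbr : G.IsBridge s(u, a)) (hconn : G.Connected)
    (hdeg : ∀ y, 2 ≤ G.degree y) (hocc : G.OddCycleCondition) {w : V} {Z : G.Walk w w}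
    (hZ : Z.IsCycle) : u ∈ Z.support ∨ a ∈ Z.support := by
  rcases hconn.reachable_deleteEdges_or u a w with h | h
  · refine .inl (hbr.symm.mem_support_of_forall_reachable hdeg hocc hZ fun x hx => ?_)
    rw [Sym2.eq_swap]
    exact h.trans (hbr.reachable_deleteEdges_of_mem_support hZ Z.start_mem_support hx)
  · exact .inr (hbr.mem_support_of_forall_reachable hdeg hocc hZ fun x hx =>
      h.trans (hbr.reachable_deleteEdges_of_mem_support hZ Z.start_mem_support hx))

theorem IsBridge.not_reachable_of_three_le_degree (hbr : G.IsBridge s(u, a))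
    (hconn : G.Connected) (hdeg : ∀ y, 2 ≤ G.degree y) (hG : G.NoEvenCycles)
    (hocc : G.OddCycleCondition) {w : V} (hwu : w ≠ u) (hw : 3 ≤ G.degree w) :
    ¬ (G.deleteEdges {s(u, a)}).Reachable u w := by
  intro huw
  have hside {v : V} {Z : G.Walk v v} (hZ : Z.IsCycle) (hwZ : w ∈ Z.support) :
      u ∈ Z.support := by
    refine hbr.symm.mem_support_of_forall_reachable hdeg hocc hZ fun x hx => ?_
    rw [Sym2.eq_swap]
    exact huw.trans (hbr.reachable_deleteEdges_of_mem_support hZ hwZ hx)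
  obtain ⟨_, C, hC, hwC⟩ := exists_isCycle_mem_support hdeg hocc w
  obtain ⟨c, hwc, hcC⟩ := hC.exists_adj_notMem_edges hwC hw
  by_cases hbr' : G.IsBridge s(w, c)
  · obtain ⟨_, D, hD, hDa⟩ := hbr.exists_isCycle_reachable hdeg
    rcases hbr'.mem_support_or_mem_support hconn hdeg hocc hD with hwD | hcD
    · exact isBridge_iff.mp hbr (huw.trans (hDa w hwD).symm)
    · exact hwu (hbr.eq_of_adj huw (hDa c hcD) hwc).1
  · obtain ⟨E, hE, hwcE⟩ := exists_isCycle_mem_edges_of_not_isBridge hwc hbr'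
    exact hwu (hG.subsingleton_inter_of_mem_edges hE hC hwcE hcC
      ⟨E.start_mem_support, hwC⟩ ⟨hside hE E.start_mem_support, hside hC hwC⟩)

theorem IsBridge.eq_or_eq_of_three_le_degree (hbr : G.IsBridge s(u, a))
    (hconn : G.Connected) (hdeg : ∀ y, 2 ≤ G.degree y) (hG : G.NoEvenCycles)
    (hocc : G.OddCycleCondition) {w : V} (hw : 3 ≤ G.degree w) : w = u ∨ w = a := by
  by_contra! h
  rcases hconn.reachable_deleteEdges_or u a w with huw | haw
  · exact hbr.not_reachable_of_three_le_degree hconn hdeg hG hocc h.1 hw huw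
  · refine hbr.symm.not_reachable_of_three_le_degree hconn hdeg hG hocc h.2 hw ?_
    rwa [Sym2.eq_swap]

lemma exists_isCycle_notMem_edges {w : V} (hnb : ∀ b, ¬ G.IsBridge s(u, b))
    (hu : 3 ≤ G.degree u) {W : G.Walk w w} (hW : W.IsCycle) (huW : u ∈ W.support) :
    ∃ D : G.Walk u u, D.IsCycle ∧ ∃ e ∈ D.edges, e ∉ W.edges := by
  obtain ⟨b, hb, hbW⟩ := hW.exists_adj_notMem_edges huW hu
  obtain ⟨D, hD, hbD⟩ := exists_isCycle_mem_edges_of_not_isBridge hb (hnb b)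
  exact ⟨D, hD, _, hbD, hbW⟩

lemma NoEvenCycles.exists_isCycle_pair (hG : G.NoEvenCycles)
    (hnb : ∀ b, ¬ G.IsBridge s(u, b)) (hu : 3 ≤ G.degree u) :
    ∃ A B : G.Walk u u, A.IsCycle ∧ B.IsCycle ∧ ∀ x ∈ A.support, x ∈ B.support → x = u := by
  obtain ⟨b, hb⟩ := G.degree_pos_iff_exists_adj u |>.mp (by omega)
  obtain ⟨A, hA, -⟩ := exists_isCycle_mem_edges_of_not_isBridge hb (hnb b)
  obtain ⟨B, hB, e, heB, heA⟩ := exists_isCycle_notMem_edges hnb hu hA A.start_mem_support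
  exact ⟨A, B, hA, hB, fun x hxA hxB => hG.subsingleton_inter_of_mem_edges hB hA heB heA
    ⟨hxB, hxA⟩ ⟨B.start_mem_support, A.start_mem_support⟩⟩

theorem NoEvenCycles.adj_of_mem_support (hG : G.NoEvenCycles) (hocc : G.OddCycleCondition)
    {v w : V} (hnu : ∀ b, ¬ G.IsBridge s(u, b)) (hnv : ∀ b, ¬ G.IsBridge s(v, b))
    (hu : 3 ≤ G.degree u) (hv : 3 ≤ G.degree v) (huv : u ≠ v) {W : G.Walk w w}
    (hW : W.IsCycle) (huW : u ∈ W.support) (hvW : v ∈ W.support) : G.Adj u v := by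
  by_contra hadj
  obtain ⟨D, hD, e, heD, heW⟩ := exists_isCycle_notMem_edges hnu hu hW huW
  obtain ⟨E, hE, e', heE, heW'⟩ := exists_isCycle_notMem_edges hnv hv hW hvW
  have hDW : ∀ x ∈ D.support, x ∈ W.support → x = u := fun x hx hxW =>
    hG.subsingleton_inter_of_mem_edges hD hW heD heW ⟨hx, hxW⟩ ⟨D.start_mem_support, huW⟩
  have hEW : ∀ x ∈ E.support, x ∈ W.support → x = v := fun x hx hxW =>
    hG.subsingleton_inter_of_mem_edges hE hW heE heW' ⟨hx, hxW⟩ ⟨E.start_mem_support, hvW⟩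
  obtain ⟨P, hP, hPDE⟩ :=
    exists_isPath_of_meet (hocc D E hD hE) D.start_mem_support E.start_mem_support
  have hlen := P.one_lt_length_of_not_adj huv hadj
  obtain ⟨m, hmP, hmu, hmv⟩ := hP.exists_mem_support_ne_ne hlen
  have hmW : m ∉ W.support := fun hmW =>
    (hPDE m hmP).elim (fun h => hmu (hDW m h hmW)) (fun h => hmv (hEW m h hmW))
  obtain ⟨Q, hQ, hQW⟩ := W.exists_isPath_support_subset hvW huW
  have hF := hP.isCycle_append_of_inter hQ
    (fun x hx hx' => (hPDE x hx).imp (hDW x · (hQW hx')) (hEW x · (hQW hx'))) (.inl hlen)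
  exact huv (hG.subsingleton_inter_of_notMem hF hW (by simp [hmP]) hmW ⟨by simp, huW⟩
    ⟨by simp, hvW⟩)

theorem NoEvenCycles.adj_of_three_le_degree (hG : G.NoEvenCycles) (hocc : G.OddCycleCondition)
    (hnb : ∀ y b, ¬ G.IsBridge s(y, b)) {v : V} (hu : 3 ≤ G.degree u) (hv : 3 ≤ G.degree v)
    (huv : u ≠ v) : G.Adj u v := by
  by_contra hadj
  have hcommon {w : V} {W : G.Walk w w} (hW : W.IsCycle) (huW : u ∈ W.support) :
      v ∉ W.support := fun hvW =>
    hadj (hG.adj_of_mem_support hocc (hnb u) (hnb v) hu hv huv hW huW hvW)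
  obtain ⟨A, B, hA, hB, hAB⟩ := hG.exists_isCycle_pair (hnb u) hu
  obtain ⟨C, D, hC, hD, hCD⟩ := hG.exists_isCycle_pair (hnb v) hv
  obtain ⟨F, hF, hvF⟩ : ∃ F : G.Walk u u, F.IsCycle ∧ v ∈ F.support := by
    rcases hG.disjoint_or_disjoint hA hB hC hD hAB hCD (hcommon hA A.start_mem_support)
        (hcommon hB B.start_mem_support) (fun h => hcommon hC h C.start_mem_support)
        (fun h => hcommon hD h D.start_mem_support) with ⟨hAD, hBC⟩ | ⟨hAC, hBD⟩
    · exact hocc.exists_common_isCycle hA hB hC hD hAB hCD hAD hBC huv hadj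
    · exact hocc.exists_common_isCycle hA hB hD hC hAB (fun x h h' => hCD x h' h) hAC hBD huv
        hadj
  exact hcommon hF F.start_mem_support hvF

end Finite

end SimpleGraph

/-- A compact graph has at most three vertices of degree at least 3. -/
theorem stmt6 {V : Type*} [Fintype V] (G : SimpleGraph V) [DecidableRel G.Adj]
    (hG : G.IsCompact) :
    {v : V | 3 ≤ G.degree v}.ncard ≤ 3 := by
  obtain ⟨hconn, hdeg, hne, hocc⟩ := hG
  by_cases hbr : ∃ y b : V, G.IsBridge s(y, b)
  · obtain ⟨y, b, hyb⟩ := hbr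
    calc {v : V | 3 ≤ G.degree v}.ncard ≤ ({y, b} : Set V).ncard :=
          Set.ncard_le_ncard (fun w hw => hyb.eq_or_eq_of_three_le_degree hconn hdeg hne hocc hw)
      _ ≤ 3 := (Set.ncard_insert_le y {b}).trans (by simp)
  · push Not at hbr
    exact hne.ncard_le_three_of_pairwise_adj fun u hu v hv huv =>
      hne.adj_of_three_le_degree hocc hbr hu hv huv
end

section
/- Let C be the compact graph of type 3 formed from three pairwise vertex-disjoint type-1 graphs A_{p_1,...,p_m}, A_{q_1,...,q_n}, A_{r_1,...,r_k} with big vertices u, v, w respectively, by adding the three edges {u,v}, {v,w}, {w,u}. Then the matching number of C equals Σp_i + Σq_i + Σr_i + 1. -/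
/-- Vertex set of the type-3 compact graph `C_{p:q:r}`: `Sum.inl 0, inl 1, inl 2` are
the big vertices `u, v, w`, and the other summands are the vertices of the odd cycles
through `u`, `v` and `w` respectively. -/
abbrev CVert (m n k : ℕ) (p : Fin m → ℕ) (q : Fin n → ℕ) (r : Fin k → ℕ) : Type :=
  Fin 3 ⊕ ((Σ i : Fin m, Fin (2 * p i)) ⊕
    ((Σ i : Fin n, Fin (2 * q i)) ⊕ (Σ i : Fin k, Fin (2 * r i))))

/-- The base edge relation of `C_{p:q:r}`: the triangle `u-v-w-u`, the odd cycles of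
lengths `2pᵢ+1` through `u`, `2qᵢ+1` through `v`, and `2rᵢ+1` through `w`. -/
def CRel (m n k : ℕ) (p : Fin m → ℕ) (q : Fin n → ℕ) (r : Fin k → ℕ) :
    CVert m n k p q r → CVert m n k p q r → Prop
  | .inl _, .inl _ => True
  | .inl a, .inr (.inl ⟨i, j⟩) => a = 0 ∧ ((j : ℕ) = 0 ∨ (j : ℕ) + 1 = 2 * p i)
  | .inl a, .inr (.inr (.inl ⟨i, j⟩)) => a = 1 ∧ ((j : ℕ) = 0 ∨ (j : ℕ) + 1 = 2 * q i)
  | .inl a, .inr (.inr (.inr ⟨i, j⟩)) => a = 2 ∧ ((j : ℕ) = 0 ∨ (j : ℕ) + 1 = 2 * r i)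
  | .inr (.inl ⟨i, j⟩), .inr (.inl ⟨i', j'⟩) => (i : ℕ) = (i' : ℕ) ∧ (j' : ℕ) = (j : ℕ) + 1
  | .inr (.inr (.inl ⟨i, j⟩)), .inr (.inr (.inl ⟨i', j'⟩)) =>
      (i : ℕ) = (i' : ℕ) ∧ (j' : ℕ) = (j : ℕ) + 1
  | .inr (.inr (.inr ⟨i, j⟩)), .inr (.inr (.inr ⟨i', j'⟩)) =>
      (i : ℕ) = (i' : ℕ) ∧ (j' : ℕ) = (j : ℕ) + 1
  | _, _ => False

/-- The compact graph `C_{p₁,…,p_m : q₁,…,q_n : r₁,…,r_k}` of type 3. -/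
def CGraph (m n k : ℕ) (p : Fin m → ℕ) (q : Fin n → ℕ) (r : Fin k → ℕ) :
    SimpleGraph (CVert m n k p q r) :=
  SimpleGraph.fromRel (CRel m n k p q r)

/-- `M` is a matching of `G`: a finite set of pairwise disjoint edges. -/
def IsMatchingSet {V : Type*} (G : SimpleGraph V) (M : Finset (Sym2 V)) : Prop :=
  (∀ e ∈ M, e ∈ G.edgeSet) ∧
    (M : Set (Sym2 V)).Pairwise fun e f => ∀ v : V, v ∈ e → v ∉ f

/- ### Auxiliary material -/

/-- The support of a `Sym2` element as a finset. -/
noncomputable def sym2Supp {V : Type*} (e : Sym2 V) : Finset V := by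
  classical
  exact Sym2.lift ⟨fun a b => ({a, b} : Finset V), fun a b => Finset.pair_comm a b⟩ e

lemma mem_sym2Supp {V : Type*} {e : Sym2 V} {v : V} : v ∈ sym2Supp e ↔ v ∈ e := by
  classical
  induction e using Sym2.ind with
  | _ a b => simp [sym2Supp, Sym2.mem_iff]

lemma matching_two_mul_card_le {V : Type*} [Fintype V] {G : SimpleGraph V}
    {M : Finset (Sym2 V)} (h : IsMatchingSet G M) : 2 * M.card ≤ Fintype.card V := by
  classical
  have hdisj : ∀ e ∈ M, ∀ f ∈ M, e ≠ f → Disjoint (sym2Supp e) (sym2Supp f) := by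
    intro e he f hf hef
    rw [Finset.disjoint_left]
    intro v hv hv'
    exact h.2 he hf hef v (mem_sym2Supp.mp hv) (mem_sym2Supp.mp hv')
  have hcard : ∀ e ∈ M, (sym2Supp e).card = 2 := by
    intro e he
    have hne := h.1 e he
    induction e using Sym2.ind with
    | _ a b =>
      have hab : a ≠ b := G.ne_of_adj (G.mem_edgeSet.mp hne)
      have hsupp : sym2Supp s(a, b) = {a, b} := by
        ext v; simp [sym2Supp]
      rw [hsupp, Finset.card_insert_of_notMem (by simp [hab]), Finset.card_singleton]
  calc 2 * M.card = ∑ e ∈ M, (sym2Supp e).card := by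
        rw [Finset.sum_congr rfl hcard, Finset.sum_const, smul_eq_mul, mul_comm]
    _ = (M.biUnion sym2Supp).card := (Finset.card_biUnion hdisj).symm
    _ ≤ Fintype.card V := Finset.card_le_univ _

abbrev EIdx (m n k : ℕ) (p : Fin m → ℕ) (q : Fin n → ℕ) (r : Fin k → ℕ) : Type :=
  Unit ⊕ ((Σ i : Fin m, Fin (p i)) ⊕ ((Σ i : Fin n, Fin (q i)) ⊕ (Σ i : Fin k, Fin (r i))))
variable {m n k : ℕ} {p : Fin m → ℕ} {q : Fin n → ℕ} {r : Fin k → ℕ}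
def va : EIdx m n k p q r → CVert m n k p q r
  | .inl _ => .inl 0
  | .inr (.inl ⟨i, t⟩) => .inr (.inl ⟨i, ⟨2 * t, by have := t.isLt; omega⟩⟩)
  | .inr (.inr (.inl ⟨i, t⟩)) => .inr (.inr (.inl ⟨i, ⟨2 * t, by have := t.isLt; omega⟩⟩))
  | .inr (.inr (.inr ⟨i, t⟩)) => .inr (.inr (.inr ⟨i, ⟨2 * t, by have := t.isLt; omega⟩⟩))
def vb : EIdx m n k p q r → CVert m n k p q r
  | .inl _ => .inl 1
  | .inr (.inl ⟨i, t⟩) => .inr (.inl ⟨i, ⟨2 * t + 1, by have := t.isLt; omega⟩⟩)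
  | .inr (.inr (.inl ⟨i, t⟩)) => .inr (.inr (.inl ⟨i, ⟨2 * t + 1, by have := t.isLt; omega⟩⟩))
  | .inr (.inr (.inr ⟨i, t⟩)) => .inr (.inr (.inr ⟨i, ⟨2 * t + 1, by have := t.isLt; omega⟩⟩))
lemma sigma_fin_mk_eq_iff {m : ℕ} {f : Fin m → ℕ} {i i' : Fin m}
    {j : Fin (f i)} {j' : Fin (f i')} :
    (⟨i, j⟩ : Σ i, Fin (f i)) = ⟨i', j'⟩ ↔ i = i' ∧ (j : ℕ) = (j' : ℕ) := by
  constructor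
  · intro h
    obtain ⟨hi, hj⟩ := Sigma.mk.inj_iff.mp h
    subst hi
    exact ⟨rfl, congrArg Fin.val (eq_of_heq hj)⟩
  · rintro ⟨hi, hj⟩
    subst hi
    exact congrArg _ (Fin.ext hj)

lemma sigma_fin_elim {m : ℕ} {f : Fin m → ℕ} {i i' : Fin m}
    {j : Fin (f i)} {j' : Fin (f i')} (h : (⟨i, j⟩ : Σ i, Fin (f i)) = ⟨i', j'⟩) :
    i = i' ∧ (j : ℕ) = (j' : ℕ) := sigma_fin_mk_eq_iff.mp h

lemma va_inj : Function.Injective (va (m := m) (n := n) (k := k) (p := p) (q := q) (r := r)) := by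
  rintro (⟨⟩ | (⟨i, t⟩ | (⟨i, t⟩ | ⟨i, t⟩))) (⟨⟩ | (⟨i', t'⟩ | (⟨i', t'⟩ | ⟨i', t'⟩))) h
  all_goals try rfl
  all_goals simp only [va, Sum.inr.injEq, Sum.inl.injEq, reduceCtorEq] at h
  all_goals first
    | obtain ⟨rfl, hj⟩ := sigma_fin_elim (f := fun i => 2 * p i) h
    | obtain ⟨rfl, hj⟩ := sigma_fin_elim (f := fun i => 2 * q i) h
    | obtain ⟨rfl, hj⟩ := sigma_fin_elim (f := fun i => 2 * r i) h
  all_goals (have hj' : 2 * (t : ℕ) = 2 * (t' : ℕ) := hj;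
              have ht : t = t' := Fin.ext (by omega); rw [ht])
lemma vb_inj : Function.Injective (vb (m := m) (n := n) (k := k) (p := p) (q := q) (r := r)) := by
  rintro (⟨⟩ | (⟨i, t⟩ | (⟨i, t⟩ | ⟨i, t⟩))) (⟨⟩ | (⟨i', t'⟩ | (⟨i', t'⟩ | ⟨i', t'⟩))) h
  all_goals try rfl
  all_goals simp only [vb, Sum.inr.injEq, Sum.inl.injEq, reduceCtorEq] at h
  all_goals first
    | obtain ⟨rfl, hj⟩ := sigma_fin_elim (f := fun i => 2 * p i) h
    | obtain ⟨rfl, hj⟩ := sigma_fin_elim (f := fun i => 2 * q i) h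
    | obtain ⟨rfl, hj⟩ := sigma_fin_elim (f := fun i => 2 * r i) h
  all_goals (have hj' : 2 * (t : ℕ) + 1 = 2 * (t' : ℕ) + 1 := hj;
              have ht : t = t' := Fin.ext (by omega); rw [ht])
lemma va_ne_vb (e e' : EIdx m n k p q r) : va e ≠ vb e' := by
  rcases e with ⟨⟩ | (⟨i, t⟩ | (⟨i, t⟩ | ⟨i, t⟩)) <;>
    rcases e' with ⟨⟩ | (⟨i', t'⟩ | (⟨i', t'⟩ | ⟨i', t'⟩))
  all_goals intro h
  all_goals simp only [va, vb, Sum.inr.injEq, Sum.inl.injEq, reduceCtorEq] at h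
  all_goals first
    | exact absurd h (by decide)
    | (obtain ⟨rfl, hj⟩ := sigma_fin_elim (f := fun i => 2 * p i) h; exact absurd (show 2 * (t : ℕ) = 2 * (t' : ℕ) + 1 from hj) (by omega))
    | (obtain ⟨rfl, hj⟩ := sigma_fin_elim (f := fun i => 2 * q i) h; exact absurd (show 2 * (t : ℕ) = 2 * (t' : ℕ) + 1 from hj) (by omega))
    | (obtain ⟨rfl, hj⟩ := sigma_fin_elim (f := fun i => 2 * r i) h; exact absurd (show 2 * (t : ℕ) = 2 * (t' : ℕ) + 1 from hj) (by omega))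

lemma va_adj_vb (e : EIdx m n k p q r) :
    (CGraph m n k p q r).Adj (va e) (vb e) := by
  rw [CGraph, SimpleGraph.fromRel_adj]
  refine ⟨va_ne_vb e e, Or.inl ?_⟩
  rcases e with ⟨⟩ | (⟨i, t⟩ | (⟨i, t⟩ | ⟨i, t⟩)) <;> simp [va, vb, CRel]

/-- The explicit matching edge indexed by `e`. -/
def gEdge (e : EIdx m n k p q r) : Sym2 (CVert m n k p q r) := s(va e, vb e)

lemma gEdge_inj :
    Function.Injective (gEdge (m := m) (n := n) (k := k) (p := p) (q := q) (r := r)) := by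
  intro e e' h
  rw [gEdge, gEdge, Sym2.eq_iff] at h
  rcases h with ⟨h1, _⟩ | ⟨h1, _⟩
  · exact va_inj h1
  · exact absurd h1 (va_ne_vb e e')

lemma mem_gEdge_cases {e : EIdx m n k p q r} {v : CVert m n k p q r}
    (h : v ∈ gEdge e) : v = va e ∨ v = vb e := Sym2.mem_iff.mp h

/-- The matching number of the type-3 compact graph `C_{p:q:r}` is
`∑ pᵢ + ∑ qᵢ + ∑ rᵢ + 1`. -/
theorem stmt17 (m n k : ℕ) (p : Fin m → ℕ) (q : Fin n → ℕ) (r : Fin k → ℕ)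
    (hm : 0 < m) (hn : 0 < n) (hk : 0 < k)
    (hp : ∀ i, 0 < p i) (hq : ∀ i, 0 < q i) (hr : ∀ i, 0 < r i) :
    IsGreatest {N : ℕ | ∃ M : Finset (Sym2 (CVert m n k p q r)),
      IsMatchingSet (CGraph m n k p q r) M ∧ M.card = N}
      (∑ i, p i + ∑ i, q i + ∑ i, r i + 1) := by
  classical
  constructor
  · -- membership: the explicit matching
    refine ⟨Finset.univ.image (gEdge (m := m) (n := n) (k := k) (p := p) (q := q) (r := r)),
      ⟨?_, ?_⟩, ?_⟩
    · intro e he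
      obtain ⟨x, _, rfl⟩ := Finset.mem_image.mp he
      exact (CGraph m n k p q r).mem_edgeSet.mpr (va_adj_vb x)
    · intro e he f hf hef v hve hvf
      obtain ⟨x, _, rfl⟩ := Finset.mem_image.mp (by exact_mod_cast he)
      obtain ⟨y, _, rfl⟩ := Finset.mem_image.mp (by exact_mod_cast hf)
      have hxy : x ≠ y := fun h => hef (by rw [h])
      rcases mem_gEdge_cases hve with rfl | rfl <;> rcases mem_gEdge_cases hvf with h | h
      · exact hxy (va_inj h)
      · exact va_ne_vb x y h
      · exact va_ne_vb y x h.symm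
      · exact hxy (vb_inj h)
    · rw [Finset.card_image_of_injective _ gEdge_inj, Finset.card_univ]
      simp only [EIdx, Fintype.card_sum, Fintype.card_unit, Fintype.card_sigma,
        Fintype.card_fin]
      omega
  · -- upper bound
    rintro N ⟨M, hM, rfl⟩
    have h1 := matching_two_mul_card_le hM
    have h2 : Fintype.card (CVert m n k p q r)
        = 3 + (∑ i, 2 * p i + (∑ i, 2 * q i + ∑ i, 2 * r i)) := by
      simp [Fintype.card_sum, Fintype.card_sigma, Fintype.card_fin]
    have h3 : ∑ i, 2 * p i = 2 * ∑ i, p i := by rw [Finset.mul_sum]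
    have h4 : ∑ i, 2 * q i = 2 * ∑ i, q i := by rw [Finset.mul_sum]
    have h5 : ∑ i, 2 * r i = 2 * ∑ i, r i := by rw [Finset.mul_sum]
    omega
end
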